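/- Let P be a finite poset and α a minimal, non-maximal element such that every element β covering α that covers at least two elements of P satisfies uc(β) = 1. Then gap(P) = gap(P \ α), where gap(Q) = c(Q) + |Q| - (max(Q) + min(Q) + edges(Q)). -/

import Mathlib

open Classical

variable {α : Type*}

/-- A saturated chain from `v` up to a maximal element: a list `v = v₀ ⋖ v₁ ⋖ … ⋖ vₖ`
with `vₖ` maximal. -/
def UpChain [PartialOrder α] (v : α) (l : List α) : Prop :=
  l.Chain' (· ⋖ ·) ∧ l.head? = some v ∧ ∃ m, l.getLast? = some m ∧ IsMax m

/-- A saturated chain from a minimal element up to `v`. -/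
def DownChain [PartialOrder α] (v : α) (l : List α) : Prop :=
  l.Chain' (· ⋖ ·) ∧ (∃ m, l.head? = some m ∧ IsMin m) ∧ l.getLast? = some v

/-- `uc v` : the number of saturated chains from `v` up to a maximal element. -/
noncomputable def uc [PartialOrder α] (v : α) : ℕ := Nat.card {l : List α // UpChain v l}

/-- `dc v` : the number of saturated chains from `v` down to a minimal element. -/
noncomputable def dc [PartialOrder α] (v : α) : ℕ := Nat.card {l : List α // DownChain v l}

/-- A maximal chain: a saturated chain from a minimal element to a maximal element. -/
def IsMaxChainList [PartialOrder α] (l : List α) : Prop :=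
  l.Chain' (· ⋖ ·) ∧ (∃ m, l.head? = some m ∧ IsMin m) ∧ ∃ m, l.getLast? = some m ∧ IsMax m

/-- `c(P)`: the number of maximal chains. -/
noncomputable def numMaxChains (α : Type*) [PartialOrder α] : ℕ :=
  Nat.card {l : List α // IsMaxChainList l}

/-- `max(P)`: the number of maximal elements. -/
noncomputable def numMax (α : Type*) [PartialOrder α] : ℕ := Nat.card {v : α // IsMax v}

/-- `min(P)`: the number of minimal elements. -/
noncomputable def numMin (α : Type*) [PartialOrder α] : ℕ := Nat.card {v : α // IsMin v}

/-- `edges(P)`: the number of cover relations (edges of the Hasse diagram). -/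
noncomputable def numEdges (α : Type*) [PartialOrder α] : ℕ :=
  Nat.card {p : α × α // p.1 ⋖ p.2}

/-- `gap(P) = c(P) + |P| - (max(P) + min(P) + edges(P))`. -/
noncomputable def gap (α : Type*) [PartialOrder α] : ℤ :=
  (numMaxChains α : ℤ) + Nat.card α - ((numMax α : ℤ) + numMin α + numEdges α)

/-- The crossing number `(uc(v)-1)(dc(v)-1)` of `v`. -/
noncomputable def crossingNumber [PartialOrder α] (v : α) : ℕ := (uc v - 1) * (dc v - 1)

/-- `c` is the center of an X-shaped subposet: there are `a, b < c < d, e`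
with `a ∥ b` and `d ∥ e`. -/
def IsXCenter [PartialOrder α] (c : α) : Prop :=
  ∃ a b d e : α, a < c ∧ b < c ∧ c < d ∧ c < e ∧
    ¬ a ≤ b ∧ ¬ b ≤ a ∧ ¬ d ≤ e ∧ ¬ e ≤ d

/-- `P` contains an X-shaped subposet. -/
def HasX (α : Type*) [PartialOrder α] : Prop := ∃ c : α, IsXCenter c

/-!
Deleting the minimal element `a` leaves an upper set of `P`, so covers, maximal elements and
saturated chains up to a maximal element are the same in `P \ a` as in `P`. A maximal chain is
a saturated chain starting at a minimal element, so `c(Q) = Σ_{m ∈ min Q} uc(m)` for every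
finite poset `Q`. The minimal elements of `P \ a` are those of `P` other than `a`, together with
the set `B₁` of upper covers of `a` that cover nothing else; let `B₂` be the remaining upper
covers of `a`. Since `uc(a) = Σ_{a ⋖ b} uc(b)`, passing from `P` to `P \ a` lowers `c` by
`Σ_{b ∈ B₂} uc(b)`, `|P|` by `1`, `min` by `1 - |B₁|` and `edges` by `|B₁| + |B₂|`, and keeps
`max`. With `uc = 1` on `B₂` these changes cancel in `gap`.
-/

open Finset

section SaturatedChains
variable [PartialOrder α] {v w : α} {l : List α}

lemma UpChain.eq_cons (hl : UpChain v l) : l = v :: l.tail :=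
  (List.head?_eq_some_iff.1 hl.2.1).elim fun _ h => h ▸ rfl

lemma UpChain.le_of_mem (hl : UpChain v l) (hw : w ∈ l) : v ≤ w := by
  have hle : (v :: l.tail).Pairwise (· ≤ ·) :=
    List.isChain_iff_pairwise.1 (hl.eq_cons ▸ hl.1.imp fun _ _ h => h.le)
  rw [hl.eq_cons, List.mem_cons] at hw
  obtain rfl | hw := hw
  · exact le_rfl
  · exact List.rel_of_pairwise_cons hle hw

lemma upChain_singleton_iff : UpChain v [w] ↔ w = v ∧ IsMax v := by
  refine ⟨fun ⟨_, hv, m, hm, hmax⟩ => ?_, ?_⟩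
  · obtain rfl := Option.some.inj hv
    obtain rfl := Option.some.inj hm
    exact ⟨rfl, hmax⟩
  · rintro ⟨rfl, hmax⟩
    exact ⟨List.isChain_singleton w, rfl, w, rfl, hmax⟩

lemma upChain_cons_cons_iff {t : List α} :
    UpChain v (v :: w :: t) ↔ v ⋖ w ∧ UpChain w (w :: t) := by
  refine ⟨fun ⟨hc, _, hm⟩ => ?_, fun ⟨hvw, hc, _, hm⟩ => ⟨hc.cons_cons hvw, rfl, ?_⟩⟩
  · obtain ⟨hvw, hc⟩ := List.isChain_cons_cons.1 hc
    exact ⟨hvw, hc, rfl, by rwa [List.getLast?_cons_cons] at hm⟩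
  · rwa [List.getLast?_cons_cons]

lemma UpChain.cons (hvw : v ⋖ w) (hl : UpChain w l) : UpChain v (v :: l) := by
  obtain ⟨t, rfl⟩ := List.head?_eq_some_iff.1 hl.2.1
  exact upChain_cons_cons_iff.2 ⟨hvw, hl⟩

instance [Finite α] (v : α) : Finite {l : List α // UpChain v l} := by
  have := Fintype.ofFinite α
  refine ((List.finite_length_le α (Fintype.card α)).subset fun l hl => ?_).to_subtype
  have hlt : l.Pairwise (· < ·) := List.isChain_iff_pairwise.1 (hl.1.imp fun _ _ h => h.lt)
  exact List.Nodup.length_le_card (hlt.imp ne_of_lt)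

noncomputable def sigmaCovByUpChainEquiv (hv : ¬ IsMax v) :
    (Σ b : {b // v ⋖ b}, {l : List α // UpChain (b : α) l}) ≃ {l : List α // UpChain v l} :=
  Equiv.ofBijective (fun x => ⟨v :: x.2.1, x.2.2.cons x.1.2⟩) <| by
    refine ⟨?_, ?_⟩
    · rintro ⟨⟨b₁, hb₁⟩, l₁, hl₁⟩ ⟨⟨b₂, hb₂⟩, l₂, hl₂⟩ he
      obtain rfl : l₁ = l₂ := (List.cons.inj (congrArg Subtype.val he)).2
      obtain rfl : b₁ = b₂ := Option.some.inj (hl₁.2.1.symm.trans hl₂.2.1)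
      rfl
    · rintro ⟨l, hl⟩
      obtain ⟨t, rfl⟩ := List.head?_eq_some_iff.1 hl.2.1
      match t, hl with
      | [], hl => exact (hv (upChain_singleton_iff.1 hl).2).elim
      | b :: t, hl =>
        obtain ⟨hvb, hbt⟩ := upChain_cons_cons_iff.1 hl
        exact ⟨⟨⟨b, hvb⟩, b :: t, hbt⟩, rfl⟩

theorem uc_eq_sum_uc_of_not_isMax [Fintype α] (hv : ¬ IsMax v) :
    uc v = ∑ b : α with v ⋖ b, uc b := by
  rw [uc, ← Nat.card_congr (sigmaCovByUpChainEquiv hv), Nat.card_sigma,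
    sum_subtype _ (fun _ => mem_filter_univ _)]
  rfl

noncomputable def sigmaIsMinUpChainEquiv :
    (Σ m : {m : α // IsMin m}, {l : List α // UpChain (m : α) l}) ≃
      {l : List α // IsMaxChainList l} :=
  Equiv.ofBijective (fun x => ⟨x.2.1, x.2.2.1, ⟨x.1, x.2.2.2.1, x.1.2⟩, x.2.2.2.2⟩) <| by
    refine ⟨?_, ?_⟩
    · rintro ⟨⟨m₁, hm₁⟩, l₁, hl₁⟩ ⟨⟨m₂, hm₂⟩, l₂, hl₂⟩ he
      obtain rfl : l₁ = l₂ := congrArg Subtype.val he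
      obtain rfl : m₁ = m₂ := Option.some.inj (hl₁.2.1.symm.trans hl₂.2.1)
      rfl
    · rintro ⟨l, hc, ⟨m, hm, hmin⟩, hmax⟩
      exact ⟨⟨⟨m, hmin⟩, l, hc, hm, hmax⟩, rfl⟩

theorem numMaxChains_eq_sum_uc [Fintype α] :
    numMaxChains α = ∑ m : α with IsMin m, uc m := by
  rw [numMaxChains, ← Nat.card_congr sigmaIsMinUpChainEquiv, Nat.card_sigma,
    sum_subtype _ (fun _ => mem_filter_univ _)]
  rfl

end SaturatedChains

section UpperSet
variable [PartialOrder α] {p : α → Prop}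

theorem isMin_subtype_iff {x : Subtype p} : IsMin x ↔ ∀ y < (x : α), ¬ p y := by
  simp [isMin_iff_forall_not_lt, Subtype.forall, ← Subtype.coe_lt_coe, imp_not_comm]

theorem IsMin.isUpperSet_ne {a : α} (hmin : IsMin a) : IsUpperSet {x | x ≠ a} :=
  fun _ _ hxy hx hya => hx (hmin.eq_of_le (hya ▸ hxy))

variable (hp : IsUpperSet {x | p x})
include hp

theorem IsUpperSet.coe_covBy_coe_iff {x y : Subtype p} : (x : α) ⋖ y ↔ x ⋖ y :=
  Set.OrdConnected.apply_covBy_apply_iff (OrderEmbedding.subtype p)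
    (by simpa using hp.ordConnected)

theorem IsUpperSet.isMax_coe_iff {x : Subtype p} : IsMax (x : α) ↔ IsMax x :=
  ⟨fun h _ hxy => h hxy, fun h y hxy => h (b := ⟨y, hp hxy x.2⟩) hxy⟩

theorem IsUpperSet.upChain_map_val_iff {x : Subtype p} {l : List (Subtype p)} :
    UpChain (x : α) (l.map Subtype.val) ↔ UpChain x l := by
  refine and_congr ?_ (and_congr ?_ ?_)
  · exact (List.isChain_map _).trans ⟨fun h => h.imp fun _ _ => hp.coe_covBy_coe_iff.1,
      fun h => h.imp fun _ _ => hp.coe_covBy_coe_iff.2⟩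
  · rw [List.head?_map]
    exact (Option.map_injective Subtype.val_injective).eq_iff (b := some x)
  · rw [List.getLast?_map]
    cases l.getLast? <;> simp [hp.isMax_coe_iff]

theorem IsUpperSet.uc_coe (x : Subtype p) : uc (x : α) = uc x := by
  refine (Nat.card_eq_of_bijective (fun l : {l // UpChain x l} =>
    (⟨l.1.map Subtype.val, hp.upChain_map_val_iff.2 l.2⟩ : {l // UpChain (x : α) l}))
    ⟨fun l₁ l₂ he => ?_, fun ⟨l, hl⟩ => ?_⟩).symm
  · exact Subtype.ext (List.map_injective_iff.2 Subtype.val_injective (congrArg Subtype.val he))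
  · lift l to List (Subtype p) using fun w hw => hp (hl.le_of_mem hw) x.2
    exact ⟨⟨l, hp.upChain_map_val_iff.1 hl⟩, rfl⟩

theorem IsUpperSet.numMax_subtype (hmax : ∀ x, IsMax x → p x) :
    numMax (Subtype p) = numMax α :=
  Nat.card_congr <| (Equiv.subtypeEquivRight fun _ => hp.isMax_coe_iff.symm).trans
    (Equiv.subtypeSubtypeEquivSubtype (hmax _))

theorem IsUpperSet.numEdges_subtype :
    numEdges (Subtype p) = Nat.card {e : α × α // e.1 ⋖ e.2 ∧ p e.1} :=
  Nat.card_congr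
    { toFun e := ⟨(e.1.1, e.1.2), hp.coe_covBy_coe_iff.2 e.2, e.1.1.2⟩
      invFun e := ⟨(⟨e.1.1, e.2.2⟩, ⟨e.1.2, hp e.2.1.le e.2.2⟩), hp.coe_covBy_coe_iff.1 e.2.1⟩
      left_inv _ := rfl
      right_inv _ := rfl }

end UpperSet

section DeleteMin
variable [Fintype α] [PartialOrder α] {a : α} {M : Type*} [AddCommMonoid M]

theorem isMin_subtype_ne_iff (hmin : IsMin a) {x : {x // x ≠ a}} :
    IsMin x ↔ IsMin (x : α) ∨ (a ⋖ x ∧ ∀ c, c ⋖ (x : α) → c = a) := by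
  simp only [isMin_subtype_iff, not_not]
  constructor
  · intro hlt
    by_cases hx : IsMin (x : α)
    · exact .inl hx
    obtain ⟨y, hy⟩ := not_isMin_iff.1 hx
    have hax : a < x := hlt y hy ▸ hy
    exact .inr ⟨⟨hax, fun z haz hzx => haz.ne' (hlt z hzx)⟩, fun c hc => hlt c hc.lt⟩
  · rintro (hx | ⟨-, hcov⟩) y hy
    · exact (hx.not_lt hy).elim
    obtain ⟨c, hyc, hcx⟩ := exists_le_covBy_of_lt hy
    exact hmin.eq_of_le (hcov c hcx ▸ hyc)

theorem sum_isMin_subtype_ne (hmin : IsMin a) (f : α → M) :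
    ∑ y : {x // x ≠ a} with IsMin y, f y =
      ∑ x ∈ ({x | IsMin x} : Finset α).erase a, f x +
        ∑ b with a ⋖ b ∧ ∀ c, c ⋖ b → c = a, f b := by
  have hmap : ({y : {x // x ≠ a} | IsMin y} : Finset _).map (Function.Embedding.subtype _) =
      ({x | IsMin x} : Finset α).erase a ∪ ({b | a ⋖ b ∧ ∀ c, c ⋖ b → c = a} : Finset α) := by
    ext x
    simp only [mem_map, mem_filter_univ, isMin_subtype_ne_iff hmin, mem_union, mem_erase]
    constructor
    · rintro ⟨⟨x, hxa⟩, hx, rfl⟩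
      exact hx.imp (fun h => ⟨hxa, h⟩) id
    · rintro (⟨hxa, hx⟩ | hx)
      exacts [⟨⟨x, hxa⟩, .inl hx, rfl⟩, ⟨⟨x, hx.1.lt.ne'⟩, .inr hx, rfl⟩]
  have hdisj : Disjoint (({x | IsMin x} : Finset α).erase a)
      ({b | a ⋖ b ∧ ∀ c, c ⋖ b → c = a} : Finset α) := by
    simp only [disjoint_left, mem_erase, mem_filter_univ]
    exact fun x ⟨_, hx⟩ hax => hx.not_lt hax.1.lt
  rw [← sum_union hdisj, ← hmap, sum_map]
  rfl

theorem sum_covBy_eq_add (f : α → M) :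
    ∑ b with a ⋖ b, f b = ∑ b with a ⋖ b ∧ ∀ c, c ⋖ b → c = a, f b +
      ∑ b with a ⋖ b ∧ ∃ c, c ≠ a ∧ c ⋖ b, f b := by
  rw [← sum_filter_add_sum_filter_not _ (fun b => ∀ c, c ⋖ b → c = a), filter_filter,
    filter_filter]
  congr 3 with b
  simp only [not_forall, exists_prop, and_comm (a := _ ⋖ b)]

theorem numEdges_eq_numEdges_subtype_ne_add (hmin : IsMin a) :
    numEdges α = numEdges {x // x ≠ a} + #{b | a ⋖ b} := by
  have hout : #{e : α × α | e.1 ⋖ e.2 ∧ e.1 = a} = #{b | a ⋖ b} := by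
    rw [← card_map (Function.Embedding.sectR a α)]
    congr 1
    ext ⟨x, y⟩
    simp only [mem_map, mem_filter_univ, Function.Embedding.sectR_apply, Prod.mk.injEq]
    constructor
    · rintro ⟨hxy, rfl⟩
      exact ⟨y, hxy, rfl, rfl⟩
    · rintro ⟨b, hb, rfl, rfl⟩
      exact ⟨hb, rfl⟩
  rw [hmin.isUpperSet_ne.numEdges_subtype, numEdges, Nat.card_eq_fintype_card,
    Fintype.card_subtype, Nat.card_eq_fintype_card, Fintype.card_subtype, ← hout,
    ← card_filter_add_card_filter_not (fun e : α × α => e.1 ≠ a), filter_filter,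
    filter_filter]
  simp only [not_not]

theorem numMin_subtype_ne_add_one (hmin : IsMin a) :
    numMin {x // x ≠ a} + 1 = numMin α + #{b | a ⋖ b ∧ ∀ c, c ⋖ b → c = a} := by
  have h := sum_isMin_subtype_ne hmin (fun _ => 1)
  simp only [sum_const, smul_eq_mul, mul_one] at h
  rw [numMin, numMin, Nat.card_eq_fintype_card, Fintype.card_subtype, h,
    Nat.card_eq_fintype_card, Fintype.card_subtype, add_right_comm,
    card_erase_add_one ((mem_filter_univ _).2 hmin)]

theorem numMaxChains_eq_numMaxChains_subtype_ne_add (hmin : IsMin a) (hmax : ¬ IsMax a) :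
    numMaxChains α = numMaxChains {x // x ≠ a} + ∑ b with a ⋖ b ∧ ∃ c, c ≠ a ∧ c ⋖ b, uc b := by
  rw [numMaxChains_eq_sum_uc, numMaxChains_eq_sum_uc]
  simp only [← hmin.isUpperSet_ne.uc_coe]
  rw [sum_isMin_subtype_ne hmin uc, ← add_sum_erase _ _ ((mem_filter_univ _).2 hmin),
    uc_eq_sum_uc_of_not_isMax hmax, sum_covBy_eq_add]
  ac_rfl

end DeleteMin

theorem gap_deletion_eq (α : Type*) [Fintype α] [PartialOrder α] (a : α)
    (hmin : IsMin a) (hmax : ¬ IsMax a)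
    (h : ∀ b : α, a ⋖ b → (∃ c, c ≠ a ∧ c ⋖ b) → uc b = 1) :
    gap α = gap {x : α // x ≠ a} := by
  have hcard : Nat.card α = Nat.card {x // x ≠ a} + 1 := by
    rw [← Nat.card_congr (Equiv.optionSubtypeNe a), Finite.card_option]
  have hnumMax : numMax {x // x ≠ a} = numMax α :=
    hmin.isUpperSet_ne.numMax_subtype fun x hx hxa => hmax (hxa ▸ hx)
  have hnumMin := numMin_subtype_ne_add_one hmin
  have hedges := numEdges_eq_numEdges_subtype_ne_add hmin
  have hchains := numMaxChains_eq_numMaxChains_subtype_ne_add hmin hmax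
  have hcovers : #{b | a ⋖ b} =
      #{b | a ⋖ b ∧ ∀ c, c ⋖ b → c = a} + #{b | a ⋖ b ∧ ∃ c, c ≠ a ∧ c ⋖ b} := by
    simp only [card_eq_sum_ones]
    exact sum_covBy_eq_add _
  have huc : ∑ b with a ⋖ b ∧ ∃ c, c ≠ a ∧ c ⋖ b, uc b =
      #{b | a ⋖ b ∧ ∃ c, c ≠ a ∧ c ⋖ b} :=
    card_eq_sum_ones _ ▸ sum_congr rfl fun b hb => ((mem_filter_univ b).1 hb).elim (h b)
  unfold gap
  omega
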